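/- arXiv:2008.01594 — 2 statements merged into one kernel-verified Lean document; each statement's English description precedes it below -/
import Mathlib

section
/- Let S, A be finite sets and fix γ ∈ [0,1), a policy π, a simulator transition function T_sim, and initial distribution ρ₀. For each action-transformer policy π_g : S × A → Δ(A), define the grounded transition function T_g(s'|s,a) = ∑_{ã} T_sim(s'|s,ã)π_g(ã|s,a), and let ρ(π_g) be the corresponding normalized discounted marginal transition distribution on S × A × S. Then the set P_g = { ρ(π_g) : π_g an action-transformer policy } is a convex subset of the simplex on S × A × S: for any π_{g1}, π_{g2} and λ ∈ [0,1], the distribution λρ(π_{g1}) + (1-λ)ρ(π_{g2}) belongs to P_g. -/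
/-- Joint distribution over (s,a,s') at time t. -/
def stepDist {S A : Type*} [Fintype S] [Fintype A]
    (π : S → A → ℝ) (T : S → A → S → ℝ) (ρ0 : S → ℝ) : ℕ → S → A → S → ℝ
  | 0 => fun s a s' => ρ0 s * π s a * T s a s'
  | t + 1 => fun s a s' => (∑ u, ∑ b, stepDist π T ρ0 t u b s) * π s a * T s a s'

/-- Normalized discounted marginal transition distribution. -/
noncomputable def margDist {S A : Type*} [Fintype S] [Fintype A]
    (γ : ℝ) (π : S → A → ℝ) (T : S → A → S → ℝ) (ρ0 : S → ℝ) : S → A → S → ℝ :=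
  fun s a s' => (1 - γ) * ∑' t : ℕ, γ ^ t * stepDist π T ρ0 t s a s'

section aux
variable {S A : Type*} [Fintype S] [Fintype A]

/-- State marginal at time t. -/
def nuDist (π : S → A → ℝ) (T : S → A → S → ℝ) (ρ0 : S → ℝ) : ℕ → S → ℝ
  | 0 => ρ0
  | t + 1 => fun s' => ∑ u, ∑ b, nuDist π T ρ0 t u * π u b * T u b s'

lemma stepDist_eq_nu (π : S → A → ℝ) (T : S → A → S → ℝ) (ρ0 : S → ℝ) :
    ∀ t s a s', stepDist π T ρ0 t s a s' = nuDist π T ρ0 t s * π s a * T s a s' := by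
  intro t
  induction t with
  | zero => intro s a s'; rfl
  | succ t ih =>
    intro s a s'
    show (∑ u, ∑ b, stepDist π T ρ0 t u b s) * π s a * T s a s' = _
    have h : (∑ u, ∑ b, stepDist π T ρ0 t u b s) = nuDist π T ρ0 (t + 1) s := by
      simp only [ih]; rfl
    rw [h]

lemma nu_nonneg (π : S → A → ℝ) (T : S → A → S → ℝ) (ρ0 : S → ℝ)
    (hπnn : ∀ s a, 0 ≤ π s a) (hTnn : ∀ s a s', 0 ≤ T s a s') (hρ0nn : ∀ s, 0 ≤ ρ0 s) :
    ∀ t s, 0 ≤ nuDist π T ρ0 t s := by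
  intro t
  induction t with
  | zero => exact hρ0nn
  | succ t ih =>
    intro s
    refine Finset.sum_nonneg fun u _ => Finset.sum_nonneg fun b _ => ?_
    exact mul_nonneg (mul_nonneg (ih u) (hπnn u b)) (hTnn u b s)

lemma nu_sum_one (π : S → A → ℝ) (T : S → A → S → ℝ) (ρ0 : S → ℝ)
    (hπsum : ∀ s, ∑ a, π s a = 1) (hTsum : ∀ s a, ∑ s', T s a s' = 1)
    (hρ0sum : ∑ s, ρ0 s = 1) :
    ∀ t, ∑ s, nuDist π T ρ0 t s = 1 := by
  intro t
  induction t with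
  | zero => exact hρ0sum
  | succ t ih =>
    show (∑ s', ∑ u, ∑ b, nuDist π T ρ0 t u * π u b * T u b s') = 1
    rw [Finset.sum_comm]
    calc (∑ u, ∑ s', ∑ b, nuDist π T ρ0 t u * π u b * T u b s')
        = ∑ u, ∑ b, ∑ s', nuDist π T ρ0 t u * π u b * T u b s' := by
          exact Finset.sum_congr rfl fun u _ => Finset.sum_comm
      _ = ∑ u, ∑ b, nuDist π T ρ0 t u * π u b := by
          refine Finset.sum_congr rfl fun u _ => Finset.sum_congr rfl fun b _ => ?_
          rw [← Finset.mul_sum, hTsum u b, mul_one]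
      _ = ∑ u, nuDist π T ρ0 t u := by
          refine Finset.sum_congr rfl fun u _ => ?_
          rw [← Finset.mul_sum, hπsum u, mul_one]
      _ = 1 := ih

lemma nu_le_one (π : S → A → ℝ) (T : S → A → S → ℝ) (ρ0 : S → ℝ)
    (hπnn : ∀ s a, 0 ≤ π s a) (hπsum : ∀ s, ∑ a, π s a = 1)
    (hTnn : ∀ s a s', 0 ≤ T s a s') (hTsum : ∀ s a, ∑ s', T s a s' = 1)
    (hρ0nn : ∀ s, 0 ≤ ρ0 s) (hρ0sum : ∑ s, ρ0 s = 1) :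
    ∀ t s, nuDist π T ρ0 t s ≤ 1 := by
  intro t s
  calc nuDist π T ρ0 t s ≤ ∑ u, nuDist π T ρ0 t u :=
        Finset.single_le_sum (fun u _ => nu_nonneg π T ρ0 hπnn hTnn hρ0nn t u)
          (Finset.mem_univ s)
    _ = 1 := nu_sum_one π T ρ0 hπsum hTsum hρ0sum t

/-- Discounted state occupancy. -/
noncomputable def occ (γ : ℝ) (π : S → A → ℝ) (T : S → A → S → ℝ) (ρ0 : S → ℝ) : S → ℝ :=
  fun s => (1 - γ) * ∑' t : ℕ, γ ^ t * nuDist π T ρ0 t s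

lemma nu_summable (γ : ℝ) (hγ0 : 0 ≤ γ) (hγ1 : γ < 1)
    (π : S → A → ℝ) (T : S → A → S → ℝ) (ρ0 : S → ℝ)
    (hπnn : ∀ s a, 0 ≤ π s a) (hπsum : ∀ s, ∑ a, π s a = 1)
    (hTnn : ∀ s a s', 0 ≤ T s a s') (hTsum : ∀ s a, ∑ s', T s a s' = 1)
    (hρ0nn : ∀ s, 0 ≤ ρ0 s) (hρ0sum : ∑ s, ρ0 s = 1) (s : S) :
    Summable (fun t : ℕ => γ ^ t * nuDist π T ρ0 t s) := by
  refine Summable.of_nonneg_of_le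
    (fun t => mul_nonneg (pow_nonneg hγ0 t) (nu_nonneg π T ρ0 hπnn hTnn hρ0nn t s))
    (fun t => ?_) (summable_geometric_of_lt_one hγ0 hγ1)
  calc γ ^ t * nuDist π T ρ0 t s ≤ γ ^ t * 1 := by
        exact mul_le_mul_of_nonneg_left
          (nu_le_one π T ρ0 hπnn hπsum hTnn hTsum hρ0nn hρ0sum t s) (pow_nonneg hγ0 t)
    _ = γ ^ t := mul_one _

lemma margDist_eq_occ (γ : ℝ) (π : S → A → ℝ) (T : S → A → S → ℝ) (ρ0 : S → ℝ)
    (s : S) (a : A) (s' : S) :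
    margDist γ π T ρ0 s a s' = occ γ π T ρ0 s * π s a * T s a s' := by
  unfold margDist occ
  have : ∀ t : ℕ, γ ^ t * stepDist π T ρ0 t s a s'
      = (γ ^ t * nuDist π T ρ0 t s) * (π s a * T s a s') := by
    intro t; rw [stepDist_eq_nu]; ring
  simp_rw [this]
  rw [tsum_mul_right]
  ring

lemma occ_nonneg (γ : ℝ) (hγ0 : 0 ≤ γ) (hγ1 : γ < 1)
    (π : S → A → ℝ) (T : S → A → S → ℝ) (ρ0 : S → ℝ)
    (hπnn : ∀ s a, 0 ≤ π s a) (hTnn : ∀ s a s', 0 ≤ T s a s') (hρ0nn : ∀ s, 0 ≤ ρ0 s)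
    (s : S) : 0 ≤ occ γ π T ρ0 s := by
  refine mul_nonneg (by linarith) (tsum_nonneg fun t => ?_)
  exact mul_nonneg (pow_nonneg hγ0 t) (nu_nonneg π T ρ0 hπnn hTnn hρ0nn t s)

lemma occ_bellman (γ : ℝ) (hγ0 : 0 ≤ γ) (hγ1 : γ < 1)
    (π : S → A → ℝ) (T : S → A → S → ℝ) (ρ0 : S → ℝ)
    (hπnn : ∀ s a, 0 ≤ π s a) (hπsum : ∀ s, ∑ a, π s a = 1)
    (hTnn : ∀ s a s', 0 ≤ T s a s') (hTsum : ∀ s a, ∑ s', T s a s' = 1)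
    (hρ0nn : ∀ s, 0 ≤ ρ0 s) (hρ0sum : ∑ s, ρ0 s = 1) (s' : S) :
    occ γ π T ρ0 s' = (1 - γ) * ρ0 s'
      + γ * ∑ u, ∑ b, occ γ π T ρ0 u * π u b * T u b s' := by
  have hsum : ∀ u, Summable (fun t : ℕ => γ ^ t * nuDist π T ρ0 t u) :=
    nu_summable γ hγ0 hγ1 π T ρ0 hπnn hπsum hTnn hTsum hρ0nn hρ0sum
  have hsum2 : ∀ u b, Summable
      (fun t : ℕ => (γ ^ t * nuDist π T ρ0 t u) * (π u b * T u b s')) :=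
    fun u b => (hsum u).mul_right _
  have htail : (∑' t : ℕ, γ ^ (t + 1) * nuDist π T ρ0 (t + 1) s')
      = γ * ∑ u, ∑ b, (∑' t : ℕ, γ ^ t * nuDist π T ρ0 t u) * (π u b * T u b s') := by
    have step : ∀ t : ℕ, γ ^ (t + 1) * nuDist π T ρ0 (t + 1) s'
        = γ * ∑ u, ∑ b, (γ ^ t * nuDist π T ρ0 t u) * (π u b * T u b s') := by
      intro t
      show γ ^ (t + 1) * (∑ u, ∑ b, nuDist π T ρ0 t u * π u b * T u b s') = _
      rw [Finset.mul_sum, Finset.mul_sum]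
      refine Finset.sum_congr rfl fun u _ => ?_
      rw [Finset.mul_sum, Finset.mul_sum]
      refine Finset.sum_congr rfl fun b _ => ?_
      ring
    simp_rw [step]
    rw [tsum_mul_left]
    congr 1
    rw [Summable.tsum_finsetSum (fun u _ => summable_sum (fun b _ => hsum2 u b))]
    refine Finset.sum_congr rfl fun u _ => ?_
    rw [Summable.tsum_finsetSum (fun b _ => hsum2 u b)]
    exact Finset.sum_congr rfl fun b _ => tsum_mul_right
  have key : (∑' t : ℕ, γ ^ t * nuDist π T ρ0 t s')
      = ρ0 s' + γ * ∑ u, ∑ b, (∑' t : ℕ, γ ^ t * nuDist π T ρ0 t u) * (π u b * T u b s') := by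
    rw [Summable.tsum_eq_zero_add (hsum s')]
    simp only [pow_zero, one_mul]
    rw [htail]
    rfl
  unfold occ
  rw [key]
  have hS : (∑ u, ∑ b, ((1 - γ) * ∑' t : ℕ, γ ^ t * nuDist π T ρ0 t u) * π u b * T u b s')
      = (1 - γ) * ∑ u, ∑ b, (∑' t : ℕ, γ ^ t * nuDist π T ρ0 t u) * (π u b * T u b s') := by
    rw [Finset.mul_sum]
    refine Finset.sum_congr rfl fun u _ => ?_
    rw [Finset.mul_sum]
    refine Finset.sum_congr rfl fun b _ => ?_
    ring
  rw [hS]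
  ring

lemma bellman_unique (γ : ℝ) (hγ0 : 0 ≤ γ) (hγ1 : γ < 1)
    (π : S → A → ℝ) (hπnn : ∀ s a, 0 ≤ π s a) (hπsum : ∀ s, ∑ a, π s a = 1)
    (T : S → A → S → ℝ) (hTnn : ∀ s a s', 0 ≤ T s a s')
    (hTsum : ∀ s a, ∑ s', T s a s' = 1)
    (c f g : S → ℝ)
    (hf : ∀ s', f s' = c s' + γ * ∑ u, ∑ b, f u * π u b * T u b s')
    (hg : ∀ s', g s' = c s' + γ * ∑ u, ∑ b, g u * π u b * T u b s') :
    f = g := by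
  set h : S → ℝ := fun s => f s - g s with hh_def
  have hh : ∀ s', h s' = γ * ∑ u, ∑ b, h u * π u b * T u b s' := by
    intro s'
    have hsplit : ∑ u, ∑ b, (f u - g u) * π u b * T u b s'
        = (∑ u, ∑ b, f u * π u b * T u b s') - ∑ u, ∑ b, g u * π u b * T u b s' := by
      rw [← Finset.sum_sub_distrib]
      refine Finset.sum_congr rfl fun u _ => ?_
      rw [← Finset.sum_sub_distrib]
      exact Finset.sum_congr rfl fun b _ => by ring
    show f s' - g s' = γ * ∑ u, ∑ b, (f u - g u) * π u b * T u b s'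
    rw [hf s', hg s', hsplit]
    ring
  set M : ℝ := ∑ u, |h u| with hM_def
  have habs : ∀ s', |h s'| ≤ γ * ∑ u, ∑ b, |h u| * π u b * T u b s' := by
    intro s'
    rw [hh s', abs_mul, abs_of_nonneg hγ0]
    refine mul_le_mul_of_nonneg_left ?_ hγ0
    refine (Finset.abs_sum_le_sum_abs _ _).trans ?_
    refine Finset.sum_le_sum fun u _ => ?_
    refine (Finset.abs_sum_le_sum_abs _ _).trans ?_
    refine Finset.sum_le_sum fun b _ => ?_
    rw [abs_mul, abs_mul, abs_of_nonneg (hπnn u b), abs_of_nonneg (hTnn u b s')]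
  have hM : M ≤ γ * M := by
    calc M = ∑ s', |h s'| := rfl
      _ ≤ ∑ s', γ * ∑ u, ∑ b, |h u| * π u b * T u b s' :=
          Finset.sum_le_sum fun s' _ => habs s'
      _ = γ * ∑ u, ∑ b, |h u| * π u b * ∑ s', T u b s' := by
          rw [← Finset.mul_sum, Finset.sum_comm]
          congr 1
          refine Finset.sum_congr rfl fun u _ => ?_
          rw [Finset.sum_comm]
          refine Finset.sum_congr rfl fun b _ => ?_
          rw [← Finset.mul_sum]
      _ = γ * ∑ u, |h u| := by
          congr 1
          refine Finset.sum_congr rfl fun u _ => ?_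
          calc (∑ b, |h u| * π u b * ∑ s', T u b s') = ∑ b, |h u| * π u b := by
                refine Finset.sum_congr rfl fun b _ => ?_
                rw [hTsum u b, mul_one]
            _ = |h u| := by rw [← Finset.mul_sum, hπsum u, mul_one]
      _ = γ * M := rfl
  have hM0 : M = 0 := by
    have hMnn : 0 ≤ M := Finset.sum_nonneg fun u _ => abs_nonneg _
    nlinarith
  funext s
  have : |h s| ≤ M := Finset.single_le_sum (fun u _ => abs_nonneg (h u)) (Finset.mem_univ s)
  rw [hM0] at this
  have : h s = 0 := abs_eq_zero.mp (le_antisymm this (abs_nonneg _))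
  have : f s - g s = 0 := this
  linarith

end aux

/-- Grounded transition function induced by an action-transformer policy. -/
def groundedT {S A : Type*} [Fintype S] [Fintype A]
    (Tsim : S → A → S → ℝ) (πg : S → A → A → ℝ) : S → A → S → ℝ :=
  fun s a s' => ∑ b, Tsim s b s' * πg s a b

/-- An action-transformer policy: a distribution over actions for each (s,a). -/
def IsATPolicy {S A : Type*} [Fintype S] [Fintype A] (πg : S → A → A → ℝ) : Prop :=
  (∀ s a b, 0 ≤ πg s a b) ∧ (∀ s a, ∑ b, πg s a b = 1)

section main
variable {S A : Type*} [Fintype S] [Fintype A]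

lemma groundedT_nonneg (Tsim : S → A → S → ℝ) (hTnn : ∀ s a s', 0 ≤ Tsim s a s')
    (πg : S → A → A → ℝ) (h : IsATPolicy πg) (s : S) (a : A) (s' : S) :
    0 ≤ groundedT Tsim πg s a s' :=
  Finset.sum_nonneg fun b _ => mul_nonneg (hTnn s b s') (h.1 s a b)

lemma groundedT_sum_one (Tsim : S → A → S → ℝ) (hTsum : ∀ s a, ∑ s', Tsim s a s' = 1)
    (πg : S → A → A → ℝ) (h : IsATPolicy πg) (s : S) (a : A) :
    ∑ s', groundedT Tsim πg s a s' = 1 := by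
  unfold groundedT
  rw [Finset.sum_comm]
  calc (∑ b, ∑ s', Tsim s b s' * πg s a b)
      = ∑ b, πg s a b := by
        refine Finset.sum_congr rfl fun b _ => ?_
        rw [← Finset.sum_mul, hTsum s b, one_mul]
    _ = 1 := h.2 s a

end main

/-- The set of normalized discounted marginal transition distributions achievable
by grounding the simulator with action-transformer policies is convex. -/
theorem stmt_3 {S A : Type*} [Fintype S] [Fintype A]
    (γ : ℝ) (hγ : γ ∈ Set.Ico (0 : ℝ) 1)
    (π : S → A → ℝ) (hπnn : ∀ s a, 0 ≤ π s a) (hπsum : ∀ s, ∑ a, π s a = 1)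
    (Tsim : S → A → S → ℝ) (hTnn : ∀ s a s', 0 ≤ Tsim s a s')
    (hTsum : ∀ s a, ∑ s', Tsim s a s' = 1)
    (ρ0 : S → ℝ) (hρ0nn : ∀ s, 0 ≤ ρ0 s) (hρ0sum : ∑ s, ρ0 s = 1)
    (πg₁ πg₂ : S → A → A → ℝ) (h₁ : IsATPolicy πg₁) (h₂ : IsATPolicy πg₂)
    (lam : ℝ) (hlam : lam ∈ Set.Icc (0 : ℝ) 1) :
    (fun s a s' => lam * margDist γ π (groundedT Tsim πg₁) ρ0 s a s'
        + (1 - lam) * margDist γ π (groundedT Tsim πg₂) ρ0 s a s')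
      ∈ {ρ : S → A → S → ℝ | ∃ πg, IsATPolicy πg ∧ ρ = margDist γ π (groundedT Tsim πg) ρ0} := by
  obtain ⟨hγ0, hγ1⟩ := hγ
  obtain ⟨hlam0, hlam1⟩ := hlam
  set T₁ := groundedT Tsim πg₁ with hT₁def
  set T₂ := groundedT Tsim πg₂ with hT₂def
  have hT₁nn := groundedT_nonneg Tsim hTnn πg₁ h₁
  have hT₂nn := groundedT_nonneg Tsim hTnn πg₂ h₂
  have hT₁sum := groundedT_sum_one Tsim hTsum πg₁ h₁
  have hT₂sum := groundedT_sum_one Tsim hTsum πg₂ h₂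
  set d₁ := occ γ π T₁ ρ0 with hd₁def
  set d₂ := occ γ π T₂ ρ0 with hd₂def
  have hd₁nn : ∀ s, 0 ≤ d₁ s := occ_nonneg γ hγ0 hγ1 π T₁ ρ0 hπnn hT₁nn hρ0nn
  have hd₂nn : ∀ s, 0 ≤ d₂ s := occ_nonneg γ hγ0 hγ1 π T₂ ρ0 hπnn hT₂nn hρ0nn
  set D : S → ℝ := fun s => lam * d₁ s + (1 - lam) * d₂ s with hDdef
  have hDnn : ∀ s, 0 ≤ D s := fun s =>
    add_nonneg (mul_nonneg hlam0 (hd₁nn s)) (mul_nonneg (by linarith) (hd₂nn s))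
  set πg : S → A → A → ℝ := fun s a b =>
    if D s = 0 then πg₁ s a b
    else (lam * d₁ s * πg₁ s a b + (1 - lam) * d₂ s * πg₂ s a b) / D s with hπgdef
  have hπgAT : IsATPolicy πg := by
    constructor
    · intro s a b
      by_cases hD : D s = 0
      · simp only [hπgdef, hD, if_pos]
        exact h₁.1 s a b
      · simp only [hπgdef, hD, if_neg, ite_false]
        refine div_nonneg ?_ (hDnn s)
        exact add_nonneg
          (mul_nonneg (mul_nonneg hlam0 (hd₁nn s)) (h₁.1 s a b))
          (mul_nonneg (mul_nonneg (by linarith) (hd₂nn s)) (h₂.1 s a b))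
    · intro s a
      by_cases hD : D s = 0
      · simp only [hπgdef, hD, ite_true]
        exact h₁.2 s a
      · simp only [hπgdef, hD, ite_false]
        have hsum : ∑ b, (lam * d₁ s * πg₁ s a b + (1 - lam) * d₂ s * πg₂ s a b) = D s := by
          rw [Finset.sum_add_distrib, ← Finset.mul_sum, ← Finset.mul_sum,
            h₁.2 s a, h₂.2 s a, mul_one, mul_one]
        rw [← Finset.sum_div, hsum, div_self hD]
  set Tg := groundedT Tsim πg with hTgdef
  have hTgnn := groundedT_nonneg Tsim hTnn πg hπgAT
  have hTgsum := groundedT_sum_one Tsim hTsum πg hπgAT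
  -- key mixing identity
  have hkey : ∀ u a s', lam * d₁ u * T₁ u a s' + (1 - lam) * d₂ u * T₂ u a s'
      = D u * Tg u a s' := by
    intro u a s'
    by_cases hD : D u = 0
    · have e : lam * d₁ u + (1 - lam) * d₂ u = 0 := hD
      have na : 0 ≤ lam * d₁ u := mul_nonneg hlam0 (hd₁nn u)
      have nb : 0 ≤ (1 - lam) * d₂ u := mul_nonneg (by linarith) (hd₂nn u)
      have h1 : lam * d₁ u = 0 := by linarith
      have h2 : (1 - lam) * d₂ u = 0 := by linarith
      rw [h1, h2, hD]
      ring
    · have expand : Tg u a s'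
          = (∑ b, Tsim u b s' * (lam * d₁ u * πg₁ u a b + (1 - lam) * d₂ u * πg₂ u a b)) / D u := by
        show (∑ b, Tsim u b s' * πg u a b) = _
        rw [Finset.sum_div]
        refine Finset.sum_congr rfl fun b _ => ?_
        simp only [hπgdef, hD, ite_false]
        rw [mul_div_assoc]
      rw [expand, ← mul_div_assoc, mul_div_cancel_left₀ _ hD]
      show lam * d₁ u * (∑ b, Tsim u b s' * πg₁ u a b)
          + (1 - lam) * d₂ u * (∑ b, Tsim u b s' * πg₂ u a b) = _
      rw [Finset.mul_sum, Finset.mul_sum, ← Finset.sum_add_distrib]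
      refine Finset.sum_congr rfl fun b _ => ?_
      ring
  -- Bellman flow equations
  have hBell1 := occ_bellman γ hγ0 hγ1 π T₁ ρ0 hπnn hπsum hT₁nn hT₁sum hρ0nn hρ0sum
  have hBell2 := occ_bellman γ hγ0 hγ1 π T₂ ρ0 hπnn hπsum hT₂nn hT₂sum hρ0nn hρ0sum
  have hBellg := occ_bellman γ hγ0 hγ1 π Tg ρ0 hπnn hπsum hTgnn hTgsum hρ0nn hρ0sum
  simp only [← hd₁def] at hBell1
  simp only [← hd₂def] at hBell2
  have hBellD : ∀ s', D s' = (1 - γ) * ρ0 s'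
      + γ * ∑ u, ∑ b, D u * π u b * Tg u b s' := by
    intro s'
    have hsum_eq : lam * (∑ u, ∑ b, d₁ u * π u b * T₁ u b s')
        + (1 - lam) * (∑ u, ∑ b, d₂ u * π u b * T₂ u b s')
        = ∑ u, ∑ b, D u * π u b * Tg u b s' := by
      rw [Finset.mul_sum, Finset.mul_sum, ← Finset.sum_add_distrib]
      refine Finset.sum_congr rfl fun u _ => ?_
      rw [Finset.mul_sum, Finset.mul_sum, ← Finset.sum_add_distrib]
      refine Finset.sum_congr rfl fun b _ => ?_
      have hk := hkey u b s'
      calc lam * (d₁ u * π u b * T₁ u b s') + (1 - lam) * (d₂ u * π u b * T₂ u b s')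
          = π u b * (lam * d₁ u * T₁ u b s' + (1 - lam) * d₂ u * T₂ u b s') := by ring
        _ = π u b * (D u * Tg u b s') := by rw [hk]
        _ = D u * π u b * Tg u b s' := by ring
    show lam * d₁ s' + (1 - lam) * d₂ s' = _
    rw [hBell1 s', hBell2 s', ← hsum_eq]
    ring
  have hocc_eq : occ γ π Tg ρ0 = D :=
    bellman_unique γ hγ0 hγ1 π hπnn hπsum Tg hTgnn hTgsum
      (fun s => (1 - γ) * ρ0 s) _ _ hBellg hBellD
  refine ⟨πg, hπgAT, ?_⟩
  funext s a s'
  rw [margDist_eq_occ, margDist_eq_occ, margDist_eq_occ, hocc_eq]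
  have hk := hkey s a s'
  show lam * (d₁ s * π s a * T₁ s a s') + (1 - lam) * (d₂ s * π s a * T₂ s a s')
      = D s * π s a * Tg s a s'
  calc lam * (d₁ s * π s a * T₁ s a s') + (1 - lam) * (d₂ s * π s a * T₂ s a s')
      = π s a * (lam * d₁ s * T₁ s a s' + (1 - lam) * d₂ s * T₂ s a s') := by ring
    _ = π s a * (D s * Tg s a s') := by rw [hk]
    _ = D s * π s a * Tg s a s' := by ring
end

section
/- Let S, A be finite, π a full-support fixed policy, γ ∈ [0,1), ρ₀ full-support. If two transition functions T₁ and T₂ induce the same normalized discounted marginal transition distribution ρ under π (i.e. ρ^{π,T₁} = ρ^{π,T₂}), then T₁ = T₂. -/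
section Aux

variable {S A : Type*} [Fintype S] [Fintype A]
variable (π : S → A → ℝ) (T : S → A → S → ℝ) (ρ0 : S → ℝ)

def wgt : ℕ → S → ℝ
  | 0 => ρ0
  | t + 1 => fun s => ∑ u, ∑ b, stepDist π T ρ0 t u b s

lemma stepDist_eq_wgt (t : ℕ) (s : S) (a : A) (s' : S) :
    stepDist π T ρ0 t s a s' = wgt π T ρ0 t s * π s a * T s a s' := by
  cases t <;> rfl

lemma stepDist_nonneg (hπ : ∀ s a, 0 ≤ π s a) (hT : ∀ s a s', 0 ≤ T s a s')
    (hρ : ∀ s, 0 ≤ ρ0 s) : ∀ t (s : S) (a : A) (s' : S), 0 ≤ stepDist π T ρ0 t s a s' := by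
  intro t
  induction t with
  | zero =>
    intro s a s'
    exact mul_nonneg (mul_nonneg (hρ s) (hπ s a)) (hT s a s')
  | succ t ih =>
    intro s a s'
    exact mul_nonneg (mul_nonneg
      (Finset.sum_nonneg fun u _ => Finset.sum_nonneg fun b _ => ih u b s) (hπ s a)) (hT s a s')

lemma wgt_nonneg (hπ : ∀ s a, 0 ≤ π s a) (hT : ∀ s a s', 0 ≤ T s a s')
    (hρ : ∀ s, 0 ≤ ρ0 s) : ∀ t (s : S), 0 ≤ wgt π T ρ0 t s := by
  intro t s
  cases t with
  | zero => exact hρ s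
  | succ t =>
    exact Finset.sum_nonneg fun u _ => Finset.sum_nonneg fun b _ =>
      stepDist_nonneg π T ρ0 hπ hT hρ t u b s

lemma wgt_total (hπsum : ∀ s, ∑ a, π s a = 1) (hTsum : ∀ s a, ∑ s', T s a s' = 1)
    (hρsum : ∑ s, ρ0 s = 1) : ∀ t, ∑ s, wgt π T ρ0 t s = 1 := by
  intro t
  induction t with
  | zero => exact hρsum
  | succ t ih =>
    show ∑ s, ∑ u, ∑ b, stepDist π T ρ0 t u b s = 1
    rw [Finset.sum_comm]
    have : ∀ u : S, ∑ s, ∑ b, stepDist π T ρ0 t u b s = wgt π T ρ0 t u := by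
      intro u
      rw [Finset.sum_comm]
      simp only [stepDist_eq_wgt]
      simp only [← Finset.sum_mul, ← Finset.mul_sum]
      simp only [hTsum, mul_one]
      rw [← Finset.mul_sum, hπsum, mul_one]
    simp only [this]
    exact ih

lemma wgt_le_one (hπ : ∀ s a, 0 ≤ π s a) (hT : ∀ s a s', 0 ≤ T s a s')
    (hρ : ∀ s, 0 ≤ ρ0 s) (hπsum : ∀ s, ∑ a, π s a = 1)
    (hTsum : ∀ s a, ∑ s', T s a s' = 1) (hρsum : ∑ s, ρ0 s = 1)
    (t : ℕ) (s : S) : wgt π T ρ0 t s ≤ 1 := by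
  calc wgt π T ρ0 t s ≤ ∑ u, wgt π T ρ0 t u :=
        Finset.single_le_sum (fun u _ => wgt_nonneg π T ρ0 hπ hT hρ t u) (Finset.mem_univ s)
    _ = 1 := wgt_total π T ρ0 hπsum hTsum hρsum t

end Aux

/-- Identifiability: under a full-support policy and full-support initial
distribution, two transition functions inducing the same normalized discounted
marginal transition distribution must be equal. -/
theorem stmt_14 {S A : Type*} [Fintype S] [Fintype A]
    (γ : ℝ) (hγ : γ ∈ Set.Ico (0 : ℝ) 1)
    (π : S → A → ℝ) (hπpos : ∀ s a, 0 < π s a) (hπsum : ∀ s, ∑ a, π s a = 1)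
    (ρ0 : S → ℝ) (hρ0pos : ∀ s, 0 < ρ0 s) (hρ0sum : ∑ s, ρ0 s = 1)
    (T₁ T₂ : S → A → S → ℝ)
    (hT₁nn : ∀ s a s', 0 ≤ T₁ s a s') (hT₁sum : ∀ s a, ∑ s', T₁ s a s' = 1)
    (hT₂nn : ∀ s a s', 0 ≤ T₂ s a s') (hT₂sum : ∀ s a, ∑ s', T₂ s a s' = 1)
    (h : margDist γ π T₁ ρ0 = margDist γ π T₂ ρ0) :
    T₁ = T₂ := by
  have hγ0 := hγ.1
  have hγ1 := hγ.2
  have h1γ : (0:ℝ) < 1 - γ := by linarith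
  have hsum : ∀ (T : S → A → S → ℝ), (∀ s a s', 0 ≤ T s a s') → (∀ s a, ∑ s', T s a s' = 1) →
      ∀ s : S, Summable (fun t => γ ^ t * wgt π T ρ0 t s) := by
    intro T hTnn hTsum s
    apply Summable.of_nonneg_of_le
      (fun t => mul_nonneg (pow_nonneg hγ0 t)
        (wgt_nonneg π T ρ0 (fun s a => (hπpos s a).le) hTnn (fun s => (hρ0pos s).le) t s))
      (fun t => by
        calc γ ^ t * wgt π T ρ0 t s ≤ γ ^ t * 1 := by
              exact mul_le_mul_of_nonneg_left
                (wgt_le_one π T ρ0 (fun s a => (hπpos s a).le) hTnn (fun s => (hρ0pos s).le)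
                  hπsum hTsum hρ0sum t s) (pow_nonneg hγ0 t)
          _ = γ ^ t := mul_one _)
      (summable_geometric_of_lt_one hγ0 hγ1)
  have hmarg : ∀ (T : S → A → S → ℝ), (∀ s a s', 0 ≤ T s a s') → (∀ s a, ∑ s', T s a s' = 1) →
      ∀ s a s', margDist γ π T ρ0 s a s' =
        (1 - γ) * ((∑' t : ℕ, γ ^ t * wgt π T ρ0 t s) * (π s a * T s a s')) := by
    intro T hTnn hTsum s a s'
    unfold margDist
    congr 1
    rw [← tsum_mul_right]
    congr 1
    funext t
    rw [stepDist_eq_wgt]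
    ring
  have hWpos : ∀ (T : S → A → S → ℝ) (hTnn : ∀ s a s', 0 ≤ T s a s')
      (hTsum : ∀ s a, ∑ s', T s a s' = 1) (s : S),
      0 < ∑' t : ℕ, γ ^ t * wgt π T ρ0 t s := by
    intro T hTnn hTsum s
    have hle : γ ^ 0 * wgt π T ρ0 0 s ≤ ∑' t : ℕ, γ ^ t * wgt π T ρ0 t s :=
      Summable.le_tsum (hsum T hTnn hTsum s) 0 (fun n _ =>
        mul_nonneg (pow_nonneg hγ0 n)
          (wgt_nonneg π T ρ0 (fun s a => (hπpos s a).le) hTnn (fun s => (hρ0pos s).le) n s))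
    have : γ ^ 0 * wgt π T ρ0 0 s = ρ0 s := by simp [wgt]
    rw [this] at hle
    exact lt_of_lt_of_le (hρ0pos s) hle
  -- W₁ = W₂
  have hWeq : ∀ s : S, (∑' t : ℕ, γ ^ t * wgt π T₁ ρ0 t s) = ∑' t : ℕ, γ ^ t * wgt π T₂ ρ0 t s := by
    intro s
    obtain ⟨a⟩ : Nonempty A := by
      by_contra hne
      rw [not_nonempty_iff] at hne
      have := hπsum s
      simp at this
    have hs : ∀ s', margDist γ π T₁ ρ0 s a s' = margDist γ π T₂ ρ0 s a s' := fun s' => by rw [h]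
    have h1 : ∑ s', margDist γ π T₁ ρ0 s a s' = ∑ s', margDist γ π T₂ ρ0 s a s' :=
      Finset.sum_congr rfl fun s' _ => hs s'
    have e1 : ∑ s', margDist γ π T₁ ρ0 s a s' = (1 - γ) * ((∑' t : ℕ, γ ^ t * wgt π T₁ ρ0 t s) * π s a) := by
      simp only [hmarg T₁ hT₁nn hT₁sum]
      rw [← Finset.mul_sum]
      congr 1
      rw [← Finset.mul_sum]
      simp only [← Finset.mul_sum]
      rw [hT₁sum s a]
      ring
    have e2 : ∑ s', margDist γ π T₂ ρ0 s a s' = (1 - γ) * ((∑' t : ℕ, γ ^ t * wgt π T₂ ρ0 t s) * π s a) := by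
      simp only [hmarg T₂ hT₂nn hT₂sum]
      rw [← Finset.mul_sum]
      congr 1
      rw [← Finset.mul_sum]
      simp only [← Finset.mul_sum]
      rw [hT₂sum s a]
      ring
    rw [e1, e2] at h1
    have := mul_left_cancel₀ (ne_of_gt h1γ) h1
    exact mul_right_cancel₀ (ne_of_gt (hπpos s a)) this
  funext s a s'
  have hs : margDist γ π T₁ ρ0 s a s' = margDist γ π T₂ ρ0 s a s' := by rw [h]
  rw [hmarg T₁ hT₁nn hT₁sum, hmarg T₂ hT₂nn hT₂sum, hWeq s] at hs
  have h2 := mul_left_cancel₀ (ne_of_gt h1γ) hs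
  have h3 := mul_left_cancel₀ (ne_of_gt (hWpos T₂ hT₂nn hT₂sum s)) h2
  exact mul_left_cancel₀ (ne_of_gt (hπpos s a)) h3
end
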